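/- arXiv:1009.4136 — 5 statements merged into one kernel-verified Lean document; each statement's English description precedes it below -/
import Mathlib

section
/- Let G be a finite group, H ≤ G a subgroup, and let ρ be an irreducible complex representation of G chosen according to the Plancherel measure. With X_H = ⟨Res_H χ_ρ, 1⟩_H / d_ρ, the second moment satisfies E_ρ[X_H²] = (1/(|G|·|H|²)) · Σ_{h₁,h₂ ∈ H} |{g ∈ G : h₁⁻¹ g h₂ = g}|. -/
/-!
Expanding the square, `∑ᵢ (∑_{h ∈ H} χᵢ(h))² = ∑_{h₁, h₂ ∈ H} ∑ᵢ χᵢ(h₂) χᵢ(h₁⁻¹)`, so the theorem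
is the column orthogonality relation `∑ᵢ χᵢ(a) χᵢ(b⁻¹) = #{g | g a = b g}`.

By Schur's lemma `∑_g ρ(g a g⁻¹)` acts on an irreducible `V` as a scalar, and taking traces gives
`d_V ∑_g χ_V(g a g⁻¹ b) = |G| χ_V(a) χ_V(b)`. Summing over `i`, column orthogonality reduces to
`∑ᵢ dᵢ χᵢ(x) = |G| [x = 1]`, i.e. to the regular representation containing `ρ i` with
multiplicity `dᵢ`. That is where completeness of the family enters: by Maschke's theorem every
representation splits into irreducibles, so its character is `∑ᵢ mᵢ χᵢ`, and orthogonality of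
irreducible characters reads off `mᵢ`.
-/

open CategoryTheory Limits Module Finset
open scoped Classical

universe u

theorem CategoryTheory.exists_mono_ne_zero_not_isIso_of_not_simple {C : Type*} [Category C]
    [HasZeroMorphisms C] {X : C} (h0 : ¬IsZero X) (hs : ¬Simple X) :
    ∃ (Y : C) (f : Y ⟶ X), Mono f ∧ f ≠ 0 ∧ ¬IsIso f := by
  by_contra! h
  refine hs ⟨fun {Y} f _ => ⟨fun _ hf => h0 ?_, fun hf => h Y f ‹_› hf⟩⟩
  subst hf
  rw [IsZero.iff_id_eq_zero, ← IsIso.inv_hom_id (0 : Y ⟶ X), comp_zero]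

theorem Representation.character_ofMulAction {k G H : Type*} [Field k] [Monoid G]
    [MulAction G H] [Fintype H] [DecidableEq H] (g : G) :
    (ofMulAction k G H).character g = #{x : H | g • x = x} := by
  rw [character, LinearMap.trace_eq_matrix_trace k (MonoidAlgebra.basis H k), Matrix.trace]
  simp [LinearMap.toMatrix_apply, MonoidAlgebra.basis, Finsupp.single_apply, Finset.sum_boole]

namespace FDRep

section Monoid

variable {k G : Type u} [Field k] [Monoid G]

theorem hom_comp_ρ {V W : FDRep k G} (f : V ⟶ W) (g : G) :
    f.hom.hom.hom ∘ₗ V.ρ g = W.ρ g ∘ₗ f.hom.hom.hom := by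
  simpa [← hom_hom_action_ρ] using congr($(f.comm g).hom.hom)

theorem trace_comp_ρ_comm {V W : FDRep k G} (f : V ⟶ W) (h : W ⟶ V) (g : G) :
    LinearMap.trace k W ((h ≫ f).hom.hom.hom ∘ₗ W.ρ g) =
      LinearMap.trace k V ((f ≫ h).hom.hom.hom ∘ₗ V.ρ g) := by
  calc LinearMap.trace k W ((h ≫ f).hom.hom.hom ∘ₗ W.ρ g)
      = LinearMap.trace k W (f.hom.hom.hom ∘ₗ (h.hom.hom.hom ∘ₗ W.ρ g)) := rfl
    _ = LinearMap.trace k V ((h.hom.hom.hom ∘ₗ W.ρ g) ∘ₗ f.hom.hom.hom) :=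
        LinearMap.trace_comp_comm' _ _
    _ = LinearMap.trace k V ((f ≫ h).hom.hom.hom ∘ₗ V.ρ g) := by
        rw [LinearMap.comp_assoc, ← hom_comp_ρ]; rfl

theorem char_biprod (V W : FDRep k G) : (V ⊞ W).character = V.character + W.character := by
  ext g
  have total : (𝟙 (V ⊞ W) : V ⊞ W ⟶ V ⊞ W).hom.hom.hom =
      (biprod.fst ≫ biprod.inl : V ⊞ W ⟶ _).hom.hom.hom +
        (biprod.snd ≫ biprod.inr : V ⊞ W ⟶ _).hom.hom.hom := by
    rw [← biprod.total]; rfl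
  calc (V ⊞ W).character g
      = LinearMap.trace k _ ((𝟙 (V ⊞ W) : V ⊞ W ⟶ V ⊞ W).hom.hom.hom ∘ₗ (V ⊞ W).ρ g) := rfl
    _ = LinearMap.trace k V ((biprod.inl ≫ biprod.fst : V ⟶ V).hom.hom.hom ∘ₗ V.ρ g) +
        LinearMap.trace k W ((biprod.inr ≫ biprod.snd : W ⟶ W).hom.hom.hom ∘ₗ W.ρ g) := by
      rw [total, LinearMap.add_comp, map_add, trace_comp_ρ_comm biprod.inl biprod.fst,
        trace_comp_ρ_comm biprod.inr biprod.snd]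
    _ = V.character g + W.character g := by simp; rfl

theorem finrank_biprod [CharZero k] (V W : FDRep k G) :
    finrank k (V ⊞ W : FDRep k G) = finrank k V + finrank k W :=
  Nat.cast_injective (R := k) (by simpa using congr_fun (char_biprod V W) 1)

theorem isZero_iff_subsingleton (V : FDRep k G) : IsZero V ↔ Subsingleton V := by
  rw [IsZero.iff_id_eq_zero]
  refine ⟨fun h => subsingleton_of_forall_eq 0 fun v => congr($(h).hom.hom.hom v), fun _ => ?_⟩
  exact Action.hom_ext _ _ (ConcreteCategory.hom_ext _ _ fun v => Subsingleton.elim _ _)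

theorem char_eq_zero_of_isZero {V : FDRep k G} (hV : IsZero V) : V.character = 0 := by
  have := (isZero_iff_subsingleton V).1 hV
  ext g
  exact (congrArg _ (Subsingleton.elim (V.ρ g) 0)).trans (map_zero _)

theorem finrank_pos_of_not_isZero {V : FDRep k G} (hV : ¬IsZero V) : 0 < finrank k V := by
  rw [isZero_iff_subsingleton, not_subsingleton_iff_nontrivial] at hV
  exact finrank_pos

end Monoid

section Group

variable {k G : Type u} [Field k] [Group G]

theorem exists_char_eq_sum_nsmul [CharZero k] [Finite G] {ι : Type*} [Fintype ι]
    (ρ : ι → FDRep k G) (hcomplete : ∀ V : FDRep k G, Simple V → ∃ i, Nonempty (V ≅ ρ i))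
    (V : FDRep k G) :
    ∃ m : ι → ℕ, V.character = ∑ i, m i • (ρ i).character := by
  induction hn : finrank k V using Nat.strong_induction_on generalizing V with
  | _ n ih =>
  subst hn
  by_cases hV : IsZero V
  · exact ⟨0, by simp [char_eq_zero_of_isZero hV]⟩
  by_cases hs : Simple V
  · obtain ⟨i, ⟨e⟩⟩ := hcomplete V hs
    exact ⟨Pi.single i 1, by simp [char_iso e, Pi.single_apply]⟩
  obtain ⟨W, f, _, hf0, hfiso⟩ := exists_mono_ne_zero_not_isIso_of_not_simple hV hs
  let Q : FDRep k G := cokernel f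
  -- Maschke: every object of `FDRep k G` is injective, so `W ⟶ V ⟶ Q` splits.
  have hS := ShortComplex.ShortExact.mk' (ShortComplex.exact_cokernel f) inferInstance
    inferInstance
  have e : V ≅ W ⊞ Q := hS.splittingOfInjective.isoBinaryBiproduct
  have hW : 0 < finrank k W := finrank_pos_of_not_isZero fun hW => hf0 (hW.eq_of_src f 0)
  have hQ : 0 < finrank k Q := finrank_pos_of_not_isZero fun hQ =>
    hfiso (have := Abelian.epi_of_cokernel_π_eq_zero f (hQ.eq_of_tgt _ 0)
      isIso_of_mono_of_epi f)
  have hrank : finrank k V = finrank k W + finrank k Q := by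
    rw [← finrank_biprod]; exact_mod_cast by simpa using congr_fun (char_iso e) 1
  obtain ⟨a, ha⟩ := ih _ (by omega) W rfl
  obtain ⟨b, hb⟩ := ih _ (by omega) Q rfl
  exact ⟨a + b, by simp [char_iso e, char_biprod, ha, hb, add_smul, sum_add_distrib]⟩

variable [Fintype G]

theorem char_leftRegular (g : G) :
    (FDRep.of (Representation.leftRegular k G)).character g =
      if g = 1 then (Nat.card G : k) else 0 := by
  rw [show (FDRep.of (Representation.leftRegular k G)).character g = _ from
    Representation.character_ofMulAction (k := k) g]
  split_ifs with hg
  · simp [hg, Nat.card_eq_fintype_card]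
  · simp [hg]

theorem finrank_mul_sum_char_conj_mul [IsAlgClosed k] (V : FDRep k G) [Simple V] (a b : G) :
    finrank k V * ∑ g : G, V.character (g * a * g⁻¹ * b) =
      Nat.card G * (V.character a * V.character b) := by
  let T : V →ₗ[k] V := ∑ g : G, V.ρ (g * a * g⁻¹)
  have hT (h : G) : T * V.ρ h = V.ρ h * T := by
    simp only [T, Finset.sum_mul, Finset.mul_sum, ← map_mul]
    exact Fintype.sum_equiv (Equiv.mulLeft h⁻¹) _ _ fun g => by simp [mul_assoc]
  let f : V ⟶ V := ⟨FGModuleCat.ofHom T, fun h => by ext v; exact congr($(hT h) v)⟩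
  obtain ⟨c, hc⟩ := endomorphism_simple_eq_smul_id k f
  have hcT : c • 1 = T := congr($(hc).hom.hom.hom)
  have htr : c * finrank k V = Nat.card G * V.character a := by
    have := congr(LinearMap.trace k V $hcT)
    rw [map_smul, LinearMap.trace_one, smul_eq_mul, map_sum] at this
    rw [this]
    exact (Finset.sum_congr rfl fun g _ => char_conj V a g).trans
      (by simp [Nat.card_eq_fintype_card])
  have htrb : c * V.character b = ∑ g : G, V.character (g * a * g⁻¹ * b) := by
    have := congr(LinearMap.trace k V ($hcT * V.ρ b))
    rw [smul_mul_assoc, one_mul, map_smul, Finset.sum_mul, map_sum] at this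
    simp only [smul_eq_mul, ← map_mul] at this
    exact this
  rw [← htrb, ← mul_assoc, mul_comm (finrank k V : k), htr, mul_assoc]

variable [IsAlgClosed k] [CharZero k] {ι : Type*} [Fintype ι] (ρ : ι → FDRep k G)

theorem card_inv_mul_sum_char_mul_char_inv_of_char_eq_sum (hirr : ∀ i, Simple (ρ i))
    (hdisj : ∀ i j : ι, Nonempty (ρ i ≅ ρ j) → i = j) {V : FDRep k G} {m : ι → ℕ}
    (hV : V.character = ∑ i, m i • (ρ i).character) (j : ι) :
    (Nat.card G : k)⁻¹ * ∑ g : G, V.character g * (ρ j).character g⁻¹ = m j := by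
  have : Invertible (Nat.card G : k) := invertibleOfNonzero (NeZero.ne _)
  have horth (i) : (Nat.card G : k)⁻¹ * ∑ g : G, (ρ i).character g * (ρ j).character g⁻¹ =
      if i = j then 1 else 0 := by
    have := hirr i; have := hirr j
    rw [char_orthonormal]
    by_cases hij : i = j
    · subst hij; simp
    · rw [if_neg fun h => hij (hdisj i j h), if_neg hij]
  calc _ = ∑ i, (m i : k) *
        ((Nat.card G : k)⁻¹ * ∑ g : G, (ρ i).character g * (ρ j).character g⁻¹) := by
        simp only [hV, Finset.sum_apply, nsmul_eq_mul, Pi.mul_apply, Pi.natCast_apply,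
          Finset.sum_mul, Finset.mul_sum]
        rw [Finset.sum_comm]
        exact Finset.sum_congr rfl fun i _ => Finset.sum_congr rfl fun g _ => by ring
    _ = m j := by
        simp only [horth, mul_ite, mul_one, mul_zero, sum_ite_eq', mem_univ, if_true]

theorem sum_finrank_mul_char (hirr : ∀ i, Simple (ρ i))
    (hdisj : ∀ i j : ι, Nonempty (ρ i ≅ ρ j) → i = j)
    (hcomplete : ∀ V : FDRep k G, Simple V → ∃ i, Nonempty (V ≅ ρ i)) (g : G) :
    ∑ i, (finrank k (ρ i) : k) * (ρ i).character g = if g = 1 then (Nat.card G : k) else 0 := by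
  obtain ⟨m, hm⟩ :=
    exists_char_eq_sum_nsmul ρ hcomplete (FDRep.of (Representation.leftRegular k G))
  have hmult (j) : (m j : k) = finrank k (ρ j) := by
    rw [← card_inv_mul_sum_char_mul_char_inv_of_char_eq_sum ρ hirr hdisj hm j]
    simp [char_leftRegular]
  rw [← char_leftRegular, hm]
  simp [hmult]

theorem sum_char_mul_char_inv_eq_card (hirr : ∀ i, Simple (ρ i))
    (hdisj : ∀ i j : ι, Nonempty (ρ i ≅ ρ j) → i = j)
    (hcomplete : ∀ V : FDRep k G, Simple V → ∃ i, Nonempty (V ≅ ρ i)) (a b : G) :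
    ∑ i, (ρ i).character a * (ρ i).character b⁻¹ = Fintype.card {g : G // g * a = b * g} := by
  have hconj (g : G) : g * a * g⁻¹ * b⁻¹ = 1 ↔ g * a = b * g := by
    rw [mul_inv_eq_one, mul_inv_eq_iff_eq_mul]
  refine mul_left_cancel₀ (NeZero.ne (Nat.card G : k)) ?_
  calc (Nat.card G : k) * ∑ i, (ρ i).character a * (ρ i).character b⁻¹
      = ∑ i, (finrank k (ρ i) : k) * ∑ g : G, (ρ i).character (g * a * g⁻¹ * b⁻¹) := by
        rw [Finset.mul_sum]
        exact Finset.sum_congr rfl fun i _ =>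
          have := hirr i; (finrank_mul_sum_char_conj_mul (ρ i) a b⁻¹).symm
    _ = ∑ g : G, ∑ i, (finrank k (ρ i) : k) * (ρ i).character (g * a * g⁻¹ * b⁻¹) := by
        simp only [Finset.mul_sum]; exact Finset.sum_comm
    _ = ∑ g : G, if g * a = b * g then (Nat.card G : k) else 0 := by
        simp only [sum_finrank_mul_char ρ hirr hdisj hcomplete, hconj]
    _ = Nat.card G * Fintype.card {g : G // g * a = b * g} := by
        rw [Finset.sum_ite, sum_const_zero, add_zero, sum_const, nsmul_eq_mul, mul_comm,
          Fintype.card_subtype]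

end Group

end FDRep

/-- For a finite group `G`, a complete family of pairwise non-isomorphic
irreducible complex representations, a subgroup `H ≤ G`, and
`X_H = ⟨Res_H χ_ρ, 1⟩_H / d_ρ`, the second moment over the Plancherel measure satisfies
`E_ρ[X_H²] = (1/(|G|·|H|²)) · Σ_{h₁,h₂ ∈ H} |{g ∈ G : h₁⁻¹ g h₂ = g}|`. -/
theorem plancherel_second_moment_of_trivial_multiplicity_fraction
    {G : Type} [Group G] [Fintype G]
    (ι : Type) [Fintype ι] (ρ : ι → FDRep ℂ G)
    (hirr : ∀ i, Simple (ρ i))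
    (hdisj : ∀ i j : ι, Nonempty (ρ i ≅ ρ j) → i = j)
    (hcomplete : ∀ V : FDRep ℂ G, Simple V → ∃ i, Nonempty (V ≅ ρ i))
    (H : Subgroup G) :
    ∑ i : ι, ((Module.finrank ℂ (ρ i) : ℂ) ^ 2 / (Fintype.card G : ℂ)) *
        ((((Fintype.card H : ℂ)⁻¹ * ∑ h : H, (ρ i).character (h : G)) /
          (Module.finrank ℂ (ρ i) : ℂ)) ^ 2)
      = (1 / ((Fintype.card G : ℂ) * (Fintype.card H : ℂ) ^ 2)) *
          ∑ h₁ : H, ∑ h₂ : H,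
            (Fintype.card {g : G // (h₁ : G)⁻¹ * g * (h₂ : G) = g} : ℂ) := by
  have hd (i : ι) : (finrank ℂ (ρ i) : ℂ) ≠ 0 := by
    have := hirr i
    exact_mod_cast (FDRep.finrank_pos_of_not_isZero (Simple.not_isZero (ρ i))).ne'
  have hsq (i : ι) : (∑ h : H, (ρ i).character h) ^ 2 =
      ∑ h₁ : H, ∑ h₂ : H, (ρ i).character h₂ * (ρ i).character (h₁ : G)⁻¹ := by
    rw [sq, Finset.sum_mul_sum, Finset.sum_comm]
    exact Fintype.sum_equiv (Equiv.inv H) _ _ fun h₁ => by simp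
  have hcard (h₁ h₂ : H) : Fintype.card {g : G // g * h₂ = h₁ * g} =
      Fintype.card {g : G // (h₁ : G)⁻¹ * g * (h₂ : G) = g} :=
    Fintype.card_congr (Equiv.subtypeEquivRight fun g => by
      rw [mul_assoc, inv_mul_eq_iff_eq_mul])
  calc _ = (1 / ((Fintype.card G : ℂ) * (Fintype.card H : ℂ) ^ 2)) *
        ∑ i, (∑ h : H, (ρ i).character h) ^ 2 := by
        rw [Finset.mul_sum]
        exact Finset.sum_congr rfl fun i _ => by field_simp [hd i]
    _ = _ := by
        simp_rw [hsq, ← hcard, ← FDRep.sum_char_mul_char_inv_eq_card ρ hirr hdisj hcomplete]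
        rw [Finset.sum_comm]
        simp_rw [Finset.sum_comm (γ := ι)]
end

section
/- Let G be a finite group and H ≤ G a subgroup. If ρ is an irreducible complex representation of G chosen according to the Plancherel measure and X_H = ⟨Res_H χ_ρ, 1⟩_H / d_ρ, then Pr_ρ[X_H = 0] ≤ |H| · Σ_{h ∈ H, h ≠ 1} 1/|h^G|, where h^G denotes the conjugacy class of h in G. -/
/-!
Irreducible characters are orthonormal in `ℓ²(G)` (after scaling by `|G|`), since
`χ(g⁻¹) = conj χ(g)`. Bessel's inequality against the class function that spreads a mass
`1 / |h^G|` over the class of each `h ∈ H \ {1}` gives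
`∑_ρ |∑_{h ∈ H \ {1}} χ_ρ(h)|² ≤ |G| · |H| · ∑_{h ∈ H \ {1}} 1 / |h^G|`, the norm of that class
function being bounded by Cauchy–Schwarz. When `X_H(ρ) = 0` the full sum over `H` vanishes, so
the inner sum is `-d_ρ` and the terms `d_ρ²` of the Plancherel probability are controlled.
-/

open CategoryTheory
open scoped Classical
open scoped ComplexOrder ComplexConjugate InnerProductSpace

namespace Matrix

variable {n 𝕜 G : Type*} [Fintype n] [DecidableEq n] [RCLike 𝕜] [Group G] [Fintype G]

/-- Unitary trick: `P = ∑ₖ (A k)ᴴ * A k` is positive definite and satisfies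
`(A g)ᴴ * P * A g = P`, so `A g⁻¹ = P⁻¹ * (A g)ᴴ * P`. -/
lemma trace_apply_inv_eq_star_trace (A : G →* Matrix n n 𝕜) (g : G) :
    trace (A g⁻¹) = star (trace (A g)) := by
  set P := ∑ k, (A k)ᴴ * A k with hP_def
  have hP : P.PosDef := by
    rw [hP_def, ← Finset.add_sum_erase _ _ (Finset.mem_univ (1 : G)), map_one, mul_one,
      conjTranspose_one]
    exact PosDef.one.add_posSemidef
      (posSemidef_sum _ fun k _ => posSemidef_conjTranspose_mul_self (A k))
  have hP_det : IsUnit P.det := (isUnit_iff_isUnit_det P).mp hP.isUnit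
  have hinv : (A g)ᴴ * P * A g = P := by
    simp only [P, Finset.mul_sum, Finset.sum_mul]
    refine Fintype.sum_equiv (Equiv.mulRight g) _ _ fun k => ?_
    simp only [Equiv.coe_mulRight, map_mul, conjTranspose_mul, Matrix.mul_assoc]
  have key : P * A g⁻¹ = (A g)ᴴ * P := by
    conv_lhs => rw [← hinv]
    rw [Matrix.mul_assoc, ← map_mul, mul_inv_cancel, map_one, Matrix.mul_one]
  calc trace (A g⁻¹) = trace (P⁻¹ * (P * A g⁻¹)) := by
        rw [← Matrix.mul_assoc, nonsing_inv_mul _ hP_det, Matrix.one_mul]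
    _ = trace ((A g)ᴴ) := by
        rw [key, ← Matrix.mul_assoc, trace_mul_comm, ← Matrix.mul_assoc,
          mul_nonsing_inv _ hP_det, Matrix.one_mul]
    _ = star (trace (A g)) := trace_conjTranspose _

end Matrix

namespace Representation

variable {𝕜 G V : Type*} [RCLike 𝕜] [Group G] [Fintype G] [AddCommGroup V] [Module 𝕜 V]
  [FiniteDimensional 𝕜 V]

lemma char_inv (ρ : Representation 𝕜 G V) (g : G) :
    ρ.character g⁻¹ = conj (ρ.character g) := by
  let b := Module.Free.chooseBasis 𝕜 V
  let A : G →* Matrix _ _ 𝕜 := (LinearMap.toMatrixAlgEquiv b).toMonoidHom.comp ρ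
  simp only [character, LinearMap.trace_eq_matrix_trace 𝕜 b]
  exact Matrix.trace_apply_inv_eq_star_trace A g

end Representation

namespace FDRep

variable {G : Type*} [Group G] [Fintype G]

lemma sum_char_mul_conj_char (V W : FDRep ℂ G) [Simple V] [Simple W] :
    ∑ g, V.character g * conj (W.character g) =
      if Nonempty (V ≅ W) then (Fintype.card G : ℂ) else 0 := by
  have hG : (Nat.card G : ℂ) ≠ 0 := Nat.cast_ne_zero.mpr Nat.card_pos.ne'
  let : Invertible (Nat.card G : ℂ) := invertibleOfNonzero hG
  have hconj (g : G) : conj (W.character g) = W.character g⁻¹ :=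
    (Representation.char_inv W.ρ g).symm
  simp only [hconj, ← Nat.card_eq_fintype_card]
  rw [← mul_right_inj' (inv_ne_zero hG), char_orthonormal V W]
  split_ifs <;> simp

end FDRep

lemma sum_norm_inner_sq_le_of_inner_eq_ite {𝕜 E ι : Type*} [RCLike 𝕜] [NormedAddCommGroup E]
    [InnerProductSpace 𝕜 E] [Fintype ι] [DecidableEq ι] {v : ι → E} {c : ℝ} (hc : 0 < c)
    (hv : ∀ i j, ⟪v i, v j⟫_𝕜 = if i = j then (c : 𝕜) else 0) (x : E) :
    ∑ i, ‖⟪v i, x⟫_𝕜‖ ^ 2 ≤ c * ‖x‖ ^ 2 := by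
  set s : 𝕜 := (((√c)⁻¹ : ℝ) : 𝕜)
  have hs : ‖s‖ ^ 2 = c⁻¹ := by
    simp [s, Real.sq_sqrt hc.le, abs_of_pos (Real.sqrt_pos.mpr hc)]
  have hw : Orthonormal 𝕜 fun i => s • v i := by
    rw [orthonormal_iff_ite]
    intro i j
    rw [inner_smul_left, inner_smul_right, hv, ← mul_assoc, RCLike.conj_mul, ← RCLike.ofReal_pow,
      hs]
    split_ifs <;> simp [hc.ne']
  have := hw.sum_inner_products_le x (s := Finset.univ)
  simp only [inner_smul_left, norm_mul, RCLike.norm_conj, mul_pow, ← Finset.mul_sum, hs] at this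
  rwa [inv_mul_le_iff₀ hc] at this

section ConjClassMass

variable {G M α : Type*} [Group G] [Fintype G] [AddCommMonoid M]

instance (h : G) : Nonempty {y // IsConj h y} := ⟨⟨h, .refl h⟩⟩

lemma sum_isConj_ite_eq_card_smul (f : G → M) (hf : ∀ g k : G, f (k * g * k⁻¹) = f g) (h : G) :
    ∑ g, (if IsConj h g then f g else 0) = Fintype.card {y // IsConj h y} • f h := by
  rw [Finset.sum_ite, Finset.sum_const_zero, add_zero, Fintype.card_subtype,
    ← Finset.sum_const]
  refine Finset.sum_congr rfl fun g hg => ?_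
  obtain ⟨k, rfl⟩ := isConj_iff.mp (Finset.mem_filter.mp hg).2
  exact hf h k

/-- Each `a ∈ S` spreads a unit mass uniformly over the conjugacy class of `x a`; for injective
`x` this is the orthogonal projection of the indicator of `x '' S` onto class functions. -/
noncomputable def conjClassMass (S : Finset α) (x : α → G) (g : G) : ℝ :=
  ∑ a ∈ S, if IsConj (x a) g then (Fintype.card {y // IsConj (x a) y} : ℝ)⁻¹ else 0

variable (S : Finset α) (x : α → G)

lemma sum_conjClassMass_mul (f : G → ℂ) (hf : ∀ g k : G, f (k * g * k⁻¹) = f g) :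
    ∑ g, (conjClassMass S x g : ℂ) * f g = ∑ a ∈ S, f (x a) := by
  simp only [conjClassMass, Complex.ofReal_sum, Finset.sum_mul, apply_ite Complex.ofReal,
    ite_mul, Complex.ofReal_zero, zero_mul]
  rw [Finset.sum_comm]
  refine Finset.sum_congr rfl fun a _ => ?_
  rw [sum_isConj_ite_eq_card_smul _ (fun g k => by rw [hf]), nsmul_eq_mul, ← mul_assoc]
  push_cast
  rw [mul_inv_cancel₀ (by exact_mod_cast Fintype.card_ne_zero), one_mul]

lemma sum_conjClassMass_sq_le :
    ∑ g, conjClassMass S x g ^ 2 ≤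
      S.card * ∑ a ∈ S, 1 / (Fintype.card {y // IsConj (x a) y} : ℝ) := by
  calc ∑ g, conjClassMass S x g ^ 2
      ≤ ∑ g, S.card * ∑ a ∈ S,
          (if IsConj (x a) g then (Fintype.card {y // IsConj (x a) y} : ℝ)⁻¹ else 0) ^ 2 :=
        Finset.sum_le_sum fun g _ => sq_sum_le_card_mul_sum_sq
    _ = S.card * ∑ a ∈ S, 1 / (Fintype.card {y // IsConj (x a) y} : ℝ) := by
        rw [← Finset.mul_sum, Finset.sum_comm]
        congr 1
        refine Finset.sum_congr rfl fun a _ => ?_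
        simp only [ite_pow, zero_pow two_ne_zero]
        rw [sum_isConj_ite_eq_card_smul _ (fun _ _ => rfl), nsmul_eq_mul]
        have : (Fintype.card {y // IsConj (x a) y} : ℝ) ≠ 0 := by
          exact_mod_cast Fintype.card_ne_zero
        field_simp

end ConjClassMass

section CharacterSums

variable {G ι α : Type*} [Group G] [Fintype G] [Fintype ι]

theorem sum_norm_sq_sum_char_le (ρ : ι → FDRep ℂ G) (hirr : ∀ i, Simple (ρ i))
    (hdisj : ∀ i j : ι, Nonempty (ρ i ≅ ρ j) → i = j) (S : Finset α) (x : α → G) :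
    ∑ i, ‖∑ a ∈ S, (ρ i).character (x a)‖ ^ 2 ≤
      Fintype.card G * (S.card * ∑ a ∈ S, 1 / (Fintype.card {y // IsConj (x a) y} : ℝ)) := by
  let χ (i : ι) : EuclideanSpace ℂ G := WithLp.toLp 2 (ρ i).character
  let F : EuclideanSpace ℂ G := WithLp.toLp 2 fun g => (conjClassMass S x g : ℂ)
  have hχ (i j : ι) : ⟪χ i, χ j⟫_ℂ = if i = j then ((Fintype.card G : ℝ) : ℂ) else 0 := by
    have := hirr i
    have := hirr j
    simp only [χ, PiLp.inner_apply, RCLike.inner_apply, Complex.ofReal_natCast]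
    rw [FDRep.sum_char_mul_conj_char]
    exact if_congr ⟨fun h => (hdisj j i h).symm, fun h => h ▸ ⟨Iso.refl _⟩⟩ rfl rfl
  have hχF (i : ι) : ‖⟪χ i, F⟫_ℂ‖ = ‖∑ a ∈ S, (ρ i).character (x a)‖ := by
    simp only [χ, F, PiLp.inner_apply, RCLike.inner_apply]
    rw [sum_conjClassMass_mul S x _ fun g k => by rw [FDRep.char_conj], ← map_sum,
      RCLike.norm_conj]
  have hF : ‖F‖ ^ 2 = ∑ g, conjClassMass S x g ^ 2 := by
    simp only [F, EuclideanSpace.norm_sq_eq, Complex.norm_real, Real.norm_eq_abs, sq_abs]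
  calc ∑ i, ‖∑ a ∈ S, (ρ i).character (x a)‖ ^ 2 = ∑ i, ‖⟪χ i, F⟫_ℂ‖ ^ 2 := by simp only [hχF]
    _ ≤ (Fintype.card G : ℝ) * ‖F‖ ^ 2 :=
        sum_norm_inner_sq_le_of_inner_eq_ite (Nat.cast_pos.mpr Fintype.card_pos) hχ F
    _ ≤ _ := by
        rw [hF]
        gcongr
        exact sum_conjClassMass_sq_le S x

end CharacterSums

lemma FDRep.sq_finrank_le_of_sum_subgroup_char_eq_zero {G : Type*} [Group G] [Fintype G]
    (V : FDRep ℂ G) (H : Subgroup G) [Fintype H]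
    (hV : ((Fintype.card H : ℂ)⁻¹ * ∑ h : H, V.character (h : G)) /
      (Module.finrank ℂ V : ℂ) = 0) :
    (Module.finrank ℂ V : ℝ) ^ 2 ≤
      ‖∑ h ∈ Finset.univ.filter (fun h : H => (h : G) ≠ 1), V.character (h : G)‖ ^ 2 := by
  rcases div_eq_zero_iff.mp hV with hsum | hd
  · have hsum : ∑ h : H, V.character (h : G) = 0 :=
      (mul_eq_zero.mp hsum).resolve_left (inv_ne_zero (Nat.cast_ne_zero.mpr Fintype.card_ne_zero))
    rw [← Finset.sum_filter_add_sum_filter_not Finset.univ (fun h : H => (h : G) ≠ 1)] at hsum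
    have hone : Finset.univ.filter (fun h : H => ¬(h : G) ≠ 1) = {1} := by
      ext h; simp
    rw [hone, Finset.sum_singleton, OneMemClass.coe_one, FDRep.char_one,
      add_eq_zero_iff_eq_neg] at hsum
    rw [hsum, norm_neg, Complex.norm_natCast]
  · rw [Nat.cast_eq_zero.mp hd, Nat.cast_zero, sq, zero_mul]
    positivity

theorem plancherel_prob_trivial_multiplicity_zero_le_general
    {G : Type} [Group G] [Fintype G]
    (ι : Type) [Fintype ι] (ρ : ι → FDRep ℂ G)
    (hirr : ∀ i, Simple (ρ i))
    (hdisj : ∀ i j : ι, Nonempty (ρ i ≅ ρ j) → i = j)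
    (H : Subgroup G) :
    ∑ i ∈ Finset.univ.filter (fun i : ι =>
        ((Fintype.card H : ℂ)⁻¹ * ∑ h : H, (ρ i).character (h : G)) /
          (Module.finrank ℂ (ρ i) : ℂ) = 0),
        ((Module.finrank ℂ (ρ i) : ℝ) ^ 2 / (Fintype.card G : ℝ))
      ≤ (Fintype.card H : ℝ) *
          ∑ h ∈ Finset.univ.filter (fun h : H => (h : G) ≠ 1),
            (1 : ℝ) / (Fintype.card {x : G // IsConj (h : G) x} : ℝ) := by
  set S := Finset.univ.filter (fun h : H => (h : G) ≠ 1)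
  have hG : (0 : ℝ) < Fintype.card G := Nat.cast_pos.mpr Fintype.card_pos
  have hS : (S.card : ℝ) ≤ Fintype.card H := Nat.cast_le.mpr (Finset.card_le_univ S)
  rw [← Finset.sum_div, div_le_iff₀' hG]
  calc ∑ i ∈ _, (Module.finrank ℂ (ρ i) : ℝ) ^ 2
      ≤ ∑ i ∈ _, ‖∑ h ∈ S, (ρ i).character (h : G)‖ ^ 2 :=
        Finset.sum_le_sum fun i hi =>
          (ρ i).sq_finrank_le_of_sum_subgroup_char_eq_zero H (Finset.mem_filter.mp hi).2
    _ ≤ ∑ i, ‖∑ h ∈ S, (ρ i).character (h : G)‖ ^ 2 :=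
        Finset.sum_le_sum_of_subset_of_nonneg (Finset.subset_univ _) fun _ _ _ => by positivity
    _ ≤ Fintype.card G * (S.card * ∑ h ∈ S, 1 / (Fintype.card {x // IsConj (h : G) x} : ℝ)) :=
        sum_norm_sq_sum_char_le ρ hirr hdisj S (↑)
    _ ≤ _ := by gcongr

/-- For a finite group `G`, a complete family of pairwise non-isomorphic
irreducible complex representations, a subgroup `H ≤ G`, and
`X_H = ⟨Res_H χ_ρ, 1⟩_H / d_ρ`, the Plancherel probability that `X_H = 0` satisfies
`Pr_ρ[X_H = 0] ≤ |H| · Σ_{h ∈ H, h ≠ 1} 1/|h^G|`. -/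
theorem plancherel_prob_trivial_multiplicity_zero_le
    {G : Type} [Group G] [Fintype G]
    (ι : Type) [Fintype ι] (ρ : ι → FDRep ℂ G)
    (hirr : ∀ i, Simple (ρ i))
    (hdisj : ∀ i j : ι, Nonempty (ρ i ≅ ρ j) → i = j)
    (hcomplete : ∀ V : FDRep ℂ G, Simple V → ∃ i, Nonempty (V ≅ ρ i))
    (H : Subgroup G) :
    ∑ i ∈ Finset.univ.filter (fun i : ι =>
        ((Fintype.card H : ℂ)⁻¹ * ∑ h : H, (ρ i).character (h : G)) /
          (Module.finrank ℂ (ρ i) : ℂ) = 0),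
        ((Module.finrank ℂ (ρ i) : ℝ) ^ 2 / (Fintype.card G : ℝ))
      ≤ (Fintype.card H : ℝ) *
          ∑ h ∈ Finset.univ.filter (fun h : H => (h : G) ≠ 1),
            (1 : ℝ) / (Fintype.card {x : G // IsConj (h : G) x} : ℝ) :=
  plancherel_prob_trivial_multiplicity_zero_le_general ι ρ hirr hdisj H
end

section
/- Let K be a finite group and let H be the subgroup of Kⁿ generated by t elements h₁, …, h_t ∈ Kⁿ. Then |H| ≤ |K|^(|K|^t). -/
/-- Let `K` be a finite group and let `H` be the subgroup of `Kⁿ`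
generated by `t` elements `h₁, …, h_t ∈ Kⁿ`. Then `|H| ≤ |K|^(|K|^t)`. -/
theorem card_closure_le_of_product_group
    {K : Type} [Group K] [Fintype K] {n t : ℕ} (h : Fin t → (Fin n → K)) :
    Nat.card (Subgroup.closure (Set.range h) : Subgroup (Fin n → K))
      ≤ (Fintype.card K) ^ ((Fintype.card K) ^ t) := by
  classical
  set H := Subgroup.closure (Set.range h) with hH
  set ev : Fin n → (Fin t → K) := fun i j => h j i with hev
  have key : ∀ x ∈ H, ∀ i i', ev i = ev i' → x i = x i' := by
    intro x hx
    induction hx using Subgroup.closure_induction with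
    | mem x hx =>
      rintro i i' hii
      obtain ⟨j, rfl⟩ := hx
      exact congrFun hii j
    | one => intro i i' _; rfl
    | mul a b _ _ ha hb =>
      intro i i' hii
      simp only [Pi.mul_apply, ha i i' hii, hb i i' hii]
    | inv a _ ha =>
      intro i i' hii
      simp only [Pi.inv_apply, ha i i' hii]
  let Φ : H → ((Fin t → K) → K) := fun x f =>
    if hf : ∃ i, ev i = f then (x : Fin n → K) hf.choose else 1
  have hΦev : ∀ (x : H) (i : Fin n), Φ x (ev i) = (x : Fin n → K) i := by
    intro x i
    have hf : ∃ i', ev i' = ev i := ⟨i, rfl⟩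
    simp only [Φ, dif_pos hf]
    exact key x x.2 _ _ hf.choose_spec
  have hinj : Function.Injective Φ := by
    intro x y hxy
    ext i
    rw [← hΦev x i, ← hΦev y i, hxy]
  calc Nat.card H ≤ Nat.card ((Fin t → K) → K) :=
        Nat.card_le_card_of_injective Φ hinj
    _ = (Fintype.card K) ^ ((Fintype.card K) ^ t) := by
        simp [Nat.card_eq_fintype_card, Fintype.card_fun, Fintype.card_fin]
end

section
/- Let K be a finite group, let h₁, …, h_t ∈ Kⁿ, let s : {1,…,n} → K^t be defined by s(i) = (π_i(h₁), …, π_i(h_t)), and let d = min over v ∈ K^t of |{i : s(i) = v}|. Then every nontrivial element h of the subgroup H generated by h₁, …, h_t has support size at least d; that is, supp(H) ≥ d, where supp(h) = |{i : π_i(h) ≠ 1}| and supp(H) = min over nontrivial h ∈ H of supp(h). -/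
/-- Let `K` be a finite group, `h₁, …, h_t ∈ Kⁿ`, let
`s(i) = (π_i(h₁), …, π_i(h_t)) ∈ K^t`, and let `d = min_{v ∈ K^t} |{i : s(i) = v}|`.
Then every nontrivial element `x` of the subgroup generated by the `h_m` has support
size at least `d`: `d ≤ |{i : π_i(x) ≠ 1}|`. -/
theorem support_of_closure_ge_min_fiber
    {K : Type} [Group K] [Fintype K] {n t : ℕ} (h : Fin t → (Fin n → K)) :
    ∀ x ∈ Subgroup.closure (Set.range h), x ≠ 1 →
      (⨅ v : Fin t → K, Nat.card {i : Fin n // (fun m : Fin t => h m i) = v})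
        ≤ Nat.card {i : Fin n // x i ≠ 1} := by
  have key : ∀ y ∈ Subgroup.closure (Set.range h),
      ∀ i j : Fin n, (fun m : Fin t => h m i) = (fun m : Fin t => h m j) → y i = y j := by
    intro y hy
    induction hy using Subgroup.closure_induction with
    | mem z hz =>
      obtain ⟨m, rfl⟩ := hz
      intro i j hij
      exact congrFun hij m
    | one => intro i j _; rfl
    | mul a b _ _ iha ihb =>
      intro i j hij
      simp only [Pi.mul_apply, iha i j hij, ihb i j hij]
    | inv a _ iha =>
      intro i j hij
      simp only [Pi.inv_apply, iha i j hij]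
  intro x hx hx1
  obtain ⟨i, hi⟩ : ∃ i : Fin n, x i ≠ 1 := by
    by_contra hc
    push_neg at hc
    exact hx1 (funext hc)
  have step1 : (⨅ v : Fin t → K, Nat.card {i : Fin n // (fun m : Fin t => h m i) = v})
      ≤ Nat.card {j : Fin n // (fun m : Fin t => h m j) = (fun m : Fin t => h m i)} :=
    ciInf_le (OrderBot.bddBelow _) _
  refine step1.trans (Nat.card_le_card_of_injective
    (fun j : {j : Fin n // (fun m : Fin t => h m j) = (fun m : Fin t => h m i)} =>
      (⟨j.1, by
        intro hj1
        exact hi ((key x hx i j.1 j.2.symm).symm ▸ hj1)⟩ : {i : Fin n // x i ≠ 1}))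
    ?_)
  intro a b hab
  exact Subtype.ext (by simpa using congrArg Subtype.val hab)
end

section
/- Let K be a finite group with trivial center, and let H ≤ Kⁿ be a nontrivial subgroup generated by t elements. If supp(H) ≥ n/(2|K|^t), then |H| · Σ_{h ∈ H, h ≠ 1} 1/|h^{Kⁿ}| ≤ |K|^(2|K|^t) · 2^(−n/(2|K|^t)), where h^{Kⁿ} denotes the conjugacy class of h in Kⁿ. -/
open scoped Classical

lemma two_le_card_conjClass {K : Type} [Group K] [Fintype K]
    (hZ : Subgroup.center K = ⊥) {a : K} (ha : a ≠ 1) :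
    2 ≤ Nat.card {y : K // IsConj a y} := by
  have hnc : ¬ ∀ g : K, g * a = a * g := by
    intro hc
    apply ha
    have : a ∈ Subgroup.center K := Subgroup.mem_center_iff.mpr hc
    rwa [hZ, Subgroup.mem_bot] at this
  push_neg at hnc
  obtain ⟨g, hg⟩ := hnc
  have h1 : IsConj a a := IsConj.refl a
  have h2 : IsConj a (g * a * g⁻¹) := isConj_iff.mpr ⟨g, rfl⟩
  have hne : (⟨a, h1⟩ : {y : K // IsConj a y}) ≠ ⟨g * a * g⁻¹, h2⟩ := by
    intro h
    apply hg
    have h' : a = g * a * g⁻¹ := congrArg Subtype.val h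
    exact mul_inv_eq_iff_eq_mul.mp h'.symm
  have : Nontrivial {y : K // IsConj a y} := ⟨_, _, hne⟩
  exact Finite.one_lt_card_iff_nontrivial.mpr this

lemma pow_supp_le_card_conjClass {K : Type} [Group K] [Fintype K]
    (hZ : Subgroup.center K = ⊥) {n : ℕ} (h : Fin n → K) :
    2 ^ (Nat.card {i : Fin n // h i ≠ 1}) ≤ Nat.card {x : Fin n → K // IsConj h x} := by
  have key : ∀ f : (∀ i, {y : K // IsConj (h i) y}), IsConj h (fun i => (f i).1) := by
    intro f
    choose c hc using fun i => isConj_iff.mp (f i).2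
    exact isConj_iff.mpr ⟨c, by funext i; simpa using hc i⟩
  have hinj : Function.Injective
      (fun f : (∀ i, {y : K // IsConj (h i) y}) =>
        (⟨fun i => (f i).1, key f⟩ : {x : Fin n → K // IsConj h x})) := by
    intro f g hfg
    funext i
    exact Subtype.ext (congrArg (fun x => x.1 i) hfg)
  have h1 : Nat.card (∀ i, {y : K // IsConj (h i) y}) ≤ Nat.card {x : Fin n → K // IsConj h x} :=
    Nat.card_le_card_of_injective _ hinj
  refine le_trans ?_ h1
  rw [Nat.card_pi]
  have hcard : Nat.card {i : Fin n // h i ≠ 1} = (Finset.univ.filter fun i => h i ≠ 1).card := by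
    rw [Nat.card_eq_fintype_card, Fintype.card_subtype]
  rw [hcard]
  calc 2 ^ (Finset.univ.filter fun i => h i ≠ 1).card
      = ∏ _i ∈ (Finset.univ.filter fun i => h i ≠ 1), 2 := by
        rw [Finset.prod_const]
    _ ≤ ∏ i ∈ (Finset.univ.filter fun i => h i ≠ 1), Nat.card {y : K // IsConj (h i) y} := by
        apply Finset.prod_le_prod'
        intro i hi
        exact two_le_card_conjClass hZ (Finset.mem_filter.mp hi).2
    _ ≤ ∏ i, Nat.card {y : K // IsConj (h i) y} := by
        apply Finset.prod_le_prod_of_subset_of_one_le' (Finset.filter_subset _ _)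
        intro i _ _
        have : Nonempty {y : K // IsConj (h i) y} := ⟨⟨h i, IsConj.refl _⟩⟩
        exact Nat.card_pos

lemma card_closure_le {K : Type} [Group K] [Fintype K] {n t : ℕ}
    (gens : Fin t → (Fin n → K)) :
    Nat.card (Subgroup.closure (Set.range gens)) ≤ Fintype.card K ^ (Fintype.card K ^ t) := by
  set H := Subgroup.closure (Set.range gens) with hH
  let S : Subgroup (Fin n → K) :=
  { carrier := {h | ∀ i i' : Fin n, (fun j => gens j i) = (fun j => gens j i') → h i = h i'}
    one_mem' := by intro i i' _; rfl
    mul_mem' := by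
      intro a b ha hb i i' hii
      simp only [Pi.mul_apply, ha i i' hii, hb i i' hii]
    inv_mem' := by
      intro a ha i i' hii
      simp only [Pi.inv_apply, ha i i' hii] }
  have hHS : H ≤ S := by
    rw [hH, Subgroup.closure_le]
    rintro _ ⟨j, rfl⟩ i i' hii
    exact congrFun hii j
  let F : H → ((Fin t → K) → K) := fun h v =>
    if hv : ∃ i, (fun j => gens j i) = v then h.1 hv.choose else 1
  have hinj : Function.Injective F := by
    intro a b hab
    apply Subtype.ext
    funext i
    have hv : ∃ i', (fun j => gens j i') = (fun j => gens j i) := ⟨i, rfl⟩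
    have ha : a.1 hv.choose = a.1 i := hHS a.2 hv.choose i hv.choose_spec
    have hb : b.1 hv.choose = b.1 i := hHS b.2 hv.choose i hv.choose_spec
    have heq := congrFun hab (fun j => gens j i)
    simp only [F, dif_pos hv] at heq
    rw [← ha, ← hb, heq]
  calc Nat.card H ≤ Nat.card ((Fin t → K) → K) := Nat.card_le_card_of_injective F hinj
    _ = Fintype.card K ^ (Fintype.card K ^ t) := by
        rw [Nat.card_eq_fintype_card, Fintype.card_fun, Fintype.card_fun, Fintype.card_fin]

/-- Let `K` be a finite group with trivial center, and let `H ≤ Kⁿ` be a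
nontrivial subgroup generated by `t` elements. If every nontrivial element of `H` has
support of size at least `n/(2|K|^t)` (i.e. `supp(H) ≥ n/(2|K|^t)`), then
`|H| · Σ_{h ∈ H, h ≠ 1} 1/|h^{Kⁿ}| ≤ |K|^(2|K|^t) · 2^(−n/(2|K|^t))`. -/
theorem card_mul_sum_inv_conjClass_le_of_support_large
    {K : Type} [Group K] [Fintype K] (hZ : Subgroup.center K = ⊥)
    {n t : ℕ} (H : Subgroup (Fin n → K)) (hne : H ≠ ⊥)
    (gens : Fin t → (Fin n → K)) (hgen : H = Subgroup.closure (Set.range gens))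
    (hsupp : ∀ h ∈ H, h ≠ 1 →
      (n : ℝ) / (2 * (Fintype.card K : ℝ) ^ t) ≤ (Nat.card {i : Fin n // h i ≠ 1} : ℝ)) :
    (Nat.card H : ℝ) *
        ∑ h ∈ Finset.univ.filter (fun h : Fin n → K => h ∈ H ∧ h ≠ 1),
          (1 : ℝ) / (Nat.card {x : Fin n → K // IsConj h x} : ℝ)
      ≤ (Fintype.card K : ℝ) ^ (2 * (Fintype.card K) ^ t) *
          (2 : ℝ) ^ (-((n : ℝ) / (2 * (Fintype.card K : ℝ) ^ t))) := by
  set s : ℝ := (n : ℝ) / (2 * (Fintype.card K : ℝ) ^ t) with hs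
  set M : ℕ := Fintype.card K ^ (Fintype.card K ^ t) with hM
  set Fs := Finset.univ.filter (fun h : Fin n → K => h ∈ H ∧ h ≠ 1) with hFs
  have hHM : Nat.card H ≤ M := by
    rw [hgen]; exact card_closure_le gens
  have hBpos : (0:ℝ) < (2:ℝ) ^ (-s) := Real.rpow_pos_of_pos two_pos _
  -- each term bound
  have hterm : ∀ h ∈ Fs, (1 : ℝ) / (Nat.card {x : Fin n → K // IsConj h x} : ℝ) ≤ (2:ℝ) ^ (-s) := by
    intro h hh
    obtain ⟨hmem, hne1⟩ := (Finset.mem_filter.mp hh).2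
    have hsup := hsupp h hmem hne1
    have hcard := pow_supp_le_card_conjClass hZ h
    have h2s : (2:ℝ) ^ s ≤ (Nat.card {x : Fin n → K // IsConj h x} : ℝ) := by
      calc (2:ℝ) ^ s ≤ (2:ℝ) ^ ((Nat.card {i : Fin n // h i ≠ 1} : ℝ)) :=
            Real.rpow_le_rpow_of_exponent_le one_le_two hsup
        _ = ((2:ℝ)) ^ (Nat.card {i : Fin n // h i ≠ 1}) := Real.rpow_natCast 2 _
        _ ≤ (Nat.card {x : Fin n → K // IsConj h x} : ℝ) := by
            calc ((2:ℝ)) ^ (Nat.card {i : Fin n // h i ≠ 1})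
                = ((2 ^ (Nat.card {i : Fin n // h i ≠ 1}) : ℕ) : ℝ) := by push_cast; ring
              _ ≤ _ := Nat.cast_le.mpr hcard
    have h2spos : (0:ℝ) < (2:ℝ) ^ s := Real.rpow_pos_of_pos two_pos _
    rw [Real.rpow_neg (by norm_num : (0:ℝ) ≤ 2), ← one_div]
    exact one_div_le_one_div_of_le h2spos h2s
  have hsum : ∑ h ∈ Fs, (1 : ℝ) / (Nat.card {x : Fin n → K // IsConj h x} : ℝ)
      ≤ (Fs.card : ℝ) * (2:ℝ) ^ (-s) := by
    have := Finset.sum_le_card_nsmul Fs _ _ hterm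
    simpa [nsmul_eq_mul] using this
  have hFcard : Fs.card ≤ Nat.card H := by
    have h1 : Nat.card H = (Finset.univ.filter (fun h : Fin n → K => h ∈ H)).card := by
      rw [Nat.card_eq_fintype_card]
      exact Fintype.card_subtype _
    rw [h1]
    apply Finset.card_le_card
    intro x hx
    simp only [hFs, Finset.mem_filter] at hx ⊢
    exact ⟨hx.1, hx.2.1⟩
  have hsum_nonneg : (0:ℝ) ≤ ∑ h ∈ Fs, (1 : ℝ) / (Nat.card {x : Fin n → K // IsConj h x} : ℝ) := by
    apply Finset.sum_nonneg
    intro h _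
    positivity
  have hRHS : ((Fintype.card K : ℝ)) ^ (2 * (Fintype.card K) ^ t) = (M:ℝ) * (M:ℝ) := by
    rw [hM, two_mul, pow_add]; push_cast; ring
  calc (Nat.card H : ℝ) * ∑ h ∈ Fs, (1 : ℝ) / (Nat.card {x : Fin n → K // IsConj h x} : ℝ)
      ≤ (Nat.card H : ℝ) * ((Fs.card : ℝ) * (2:ℝ) ^ (-s)) := by
        apply mul_le_mul_of_nonneg_left hsum (Nat.cast_nonneg _)
    _ ≤ (M : ℝ) * ((M : ℝ) * (2:ℝ) ^ (-s)) := by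
        have h1 : (Nat.card H : ℝ) ≤ (M:ℝ) := Nat.cast_le.mpr hHM
        have h2 : (Fs.card : ℝ) ≤ (M:ℝ) := Nat.cast_le.mpr (le_trans hFcard hHM)
        gcongr
    _ = (Fintype.card K : ℝ) ^ (2 * (Fintype.card K) ^ t) * (2:ℝ) ^ (-s) := by
        rw [hRHS]; ring
end
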